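/- arXiv:2605.00467 — 3 statements merged into one kernel-verified Lean document; each statement's English description precedes it below -/
import Mathlib

section
/- Let n be a positive integer and let x be an n×n complex matrix such that I − x xᴴ and I − xᴴ x are (Hermitian) positive definite. Then (I − x xᴴ)^{−1/2} · x · (I − xᴴ x)^{1/2} = x, where M^{1/2} denotes the unique positive semidefinite square root of a positive semidefinite Hermitian matrix M and M^{−1/2} denotes the inverse of M^{1/2}. -/
/-!
With `A = (1 - x xᴴ)^{1/2}` and `B = (1 - xᴴ x)^{1/2}`, the identity `x (1 - xᴴ x) = (1 - x xᴴ) x`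
says `A² x = x B²`, and this passes to the square roots: for positive semidefinite `A`, `B`, the
matrix `M = A X - X B` solves `A M + M B = 0`; as `tr (Mᴴ A M)` and `tr (M B Mᴴ)` are nonnegative
with zero sum, `A M = 0 = M B`, whence `tr (Mᴴ M) = tr (Xᴴ A M) - tr (Xᴴ M B) = 0`.
-/

open Matrix
open scoped ComplexOrder

/-- The square root of a positive semidefinite matrix, as defined in Mathlib (December 2024),
since removed from Mathlib. -/
noncomputable def Matrix.PosSemidef.sqrt {n : Type*} [Fintype n] [DecidableEq n] {𝕜 : Type*} [RCLike 𝕜]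
    {A : Matrix n n 𝕜} (hA : A.PosSemidef) : Matrix n n 𝕜 :=
  hA.1.eigenvectorUnitary.1 * diagonal ((↑) ∘ (√·) ∘ hA.1.eigenvalues) *
    (star hA.1.eigenvectorUnitary : Matrix n n 𝕜)

open scoped MatrixOrder

namespace Matrix

variable {m n 𝕜 : Type*} [Fintype m] [Fintype n] [RCLike 𝕜]

namespace PosSemidef

section sqrt

variable [DecidableEq n] {A : Matrix n n 𝕜} (hA : A.PosSemidef)
include hA

lemma sqrt_eq_cfcSqrt : hA.sqrt = CFC.sqrt A := by
  rw [CFC.sqrt_eq_real_sqrt A hA.nonneg, cfcₙ_eq_cfc, hA.1.cfc_eq]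
  rfl

lemma posSemidef_sqrt : hA.sqrt.PosSemidef := by
  rw [sqrt_eq_cfcSqrt]
  exact (CFC.sqrt_nonneg A).posSemidef

lemma sqrt_mul_self : hA.sqrt * hA.sqrt = A := by
  rw [sqrt_eq_cfcSqrt]
  exact CFC.sqrt_mul_sqrt_self A hA.nonneg

end sqrt

lemma mul_eq_zero_of_mul_add_mul_eq_zero {A : Matrix m m 𝕜} {B : Matrix n n 𝕜}
    {M : Matrix m n 𝕜} (hA : A.PosSemidef) (hB : B.PosSemidef) (h : A * M + M * B = 0) :
    A * M = 0 := by
  classical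
  have hsum : (Mᴴ * A * M).trace + (M * B * Mᴴ).trace = 0 := by
    rw [Matrix.mul_assoc, trace_mul_comm (M * B), ← trace_add, ← Matrix.mul_add, h,
      Matrix.mul_zero, trace_zero]
  have hAM : (Mᴴ * A * M).trace = 0 :=
    le_antisymm (eq_neg_of_add_eq_zero_left hsum ▸
      neg_nonpos.mpr (hB.mul_mul_conjTranspose_same M).trace_nonneg)
      (hA.conjTranspose_mul_mul_same M).trace_nonneg
  obtain ⟨P, rfl⟩ := CStarAlgebra.nonneg_iff_eq_star_mul_self.mp hA.nonneg
  have hPM : P * M = 0 := by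
    rw [← trace_conjTranspose_mul_self_eq_zero_iff, conjTranspose_mul]
    simpa only [star_eq_conjTranspose, Matrix.mul_assoc] using hAM
  rw [Matrix.mul_assoc, hPM, Matrix.mul_zero]

lemma mul_eq_mul_of_mul_self_mul_eq_mul_mul_self {A : Matrix m m 𝕜} {B : Matrix n n 𝕜}
    {X : Matrix m n 𝕜} (hA : A.PosSemidef) (hB : B.PosSemidef) (h : A * A * X = X * (B * B)) :
    A * X = X * B := by
  set M := A * X - X * B
  have hsylv : A * M + M * B = 0 := by
    simp only [M, Matrix.mul_sub, Matrix.sub_mul, ← Matrix.mul_assoc, h]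
    abel
  have hAM : A * M = 0 := mul_eq_zero_of_mul_add_mul_eq_zero hA hB hsylv
  have hMB : M * B = 0 := by
    have hsylv' : B * Mᴴ + Mᴴ * A = 0 := by
      simpa only [conjTranspose_add, conjTranspose_mul, hA.1.eq, hB.1.eq, add_comm,
        conjTranspose_zero] using congrArg (·ᴴ) hsylv
    simpa only [conjTranspose_mul, hB.1.eq, conjTranspose_conjTranspose, conjTranspose_zero]
      using congrArg (·ᴴ) (mul_eq_zero_of_mul_add_mul_eq_zero hB hA hsylv')
  have hMM : (Mᴴ * M).trace = 0 := by
    calc (Mᴴ * M).trace = (Xᴴ * (A * M)).trace - (Xᴴ * (M * B)).trace := by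
          simp only [M, conjTranspose_sub, conjTranspose_mul, hA.1.eq, hB.1.eq, Matrix.sub_mul,
            trace_sub, Matrix.mul_assoc, trace_mul_comm B]
      _ = 0 := by rw [hAM, hMB, Matrix.mul_zero, trace_zero, sub_zero]
  exact sub_eq_zero.mp (trace_conjTranspose_mul_self_eq_zero_iff.mp hMM)

end PosSemidef

lemma PosDef.isUnit_sqrt [DecidableEq n] {A : Matrix n n 𝕜} (hA : A.PosDef) :
    IsUnit hA.posSemidef.sqrt :=
  isUnit_of_mul_isUnit_left (hA.posSemidef.sqrt_mul_self ▸ hA.isUnit)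

end Matrix

theorem siegel_sqrt_conjugation_identity_general {n : ℕ}
    (x : Matrix (Fin n) (Fin n) ℂ)
    (h1 : (1 - x * xᴴ).PosDef) (h2 : (1 - xᴴ * x).PosDef) :
    (h1.posSemidef.sqrt)⁻¹ * x * h2.posSemidef.sqrt = x := by
  have hintertwine : h1.posSemidef.sqrt * x = x * h2.posSemidef.sqrt := by
    refine h1.posSemidef.posSemidef_sqrt.mul_eq_mul_of_mul_self_mul_eq_mul_mul_self
      h2.posSemidef.posSemidef_sqrt ?_
    rw [h1.posSemidef.sqrt_mul_self, h2.posSemidef.sqrt_mul_self]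
    noncomm_ring
  rw [Matrix.mul_assoc, ← hintertwine, ← Matrix.mul_assoc,
    nonsing_inv_mul _ ((isUnit_iff_isUnit_det _).mp h1.isUnit_sqrt), Matrix.one_mul]

/-- Lemma C.1 (first identity): for `x` with `I - x xᴴ` and `I - xᴴ x` positive definite,
`(I - x xᴴ)^{-1/2} * x * (I - xᴴ x)^{1/2} = x`. -/
theorem siegel_sqrt_conjugation_identity {n : ℕ} (hn : 0 < n)
    (x : Matrix (Fin n) (Fin n) ℂ)
    (h1 : (1 - x * xᴴ).PosDef) (h2 : (1 - xᴴ * x).PosDef) :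
    (h1.posSemidef.sqrt)⁻¹ * x * h2.posSemidef.sqrt = x :=
  siegel_sqrt_conjugation_identity_general x h1 h2
end

section
/- Let n be a positive integer and let x, y be n×n complex matrices such that the matrices I − x xᴴ and I − xᴴ x are invertible. Then (I − y xᴴ)(I − x xᴴ)^{−1}(I − x yᴴ) − (y − x)(I − xᴴ x)^{−1}(yᴴ − xᴴ) = I − y yᴴ. -/
open Matrix

lemma siegel_aux {R : Type*} [Ring R] (A B x xs y ys : R)
    (h1 : A * x = x * B) (h2 : xs * A = B * xs)
    (h3 : A * x * xs = A - 1) (h4 : xs * x * B = B - 1) :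
    (1 - y * xs) * A * (1 - x * ys) - (y - x) * B * (ys - xs) = 1 - y * ys := by
  have hxAx : xs * (A * x) = B - 1 := by
    rw [h1, ← mul_assoc, h4]
  have hxBxs : x * B * xs = A - 1 := by
    rw [← h1, h3]
  calc (1 - y * xs) * A * (1 - x * ys) - (y - x) * B * (ys - xs)
      = (A - (A * x) * ys - y * (xs * A) + y * (xs * (A * x)) * ys)
        - (y * (B * ys) - y * (B * xs) - x * (B * ys) + x * B * xs) := by
        noncomm_ring
    _ = (A - (A * x) * ys - y * (B * xs) + y * (B - 1) * ys)
        - (y * (B * ys) - y * (B * xs) - x * (B * ys) + (A - 1)) := by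
        rw [hxAx, hxBxs, h2]
    _ = 1 - y * ys := by
        rw [h1]; noncomm_ring

/-- Key step in the proof of Lemma C.2:
`(I - y xᴴ)(I - x xᴴ)⁻¹(I - x yᴴ) - (y - x)(I - xᴴ x)⁻¹(yᴴ - xᴴ) = I - y yᴴ`. -/
theorem siegel_A_identity {n : ℕ} (hn : 0 < n)
    (x y : Matrix (Fin n) (Fin n) ℂ)
    (h1 : IsUnit (1 - x * xᴴ)) (h2 : IsUnit (1 - xᴴ * x)) :
    (1 - y * xᴴ) * (1 - x * xᴴ)⁻¹ * (1 - x * yᴴ)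
      - (y - x) * (1 - xᴴ * x)⁻¹ * (yᴴ - xᴴ) = 1 - y * yᴴ := by
  have hd1 : IsUnit (1 - x * xᴴ).det := (Matrix.isUnit_iff_isUnit_det _).mp h1
  have hd2 : IsUnit (1 - xᴴ * x).det := (Matrix.isUnit_iff_isUnit_det _).mp h2
  set A := (1 - x * xᴴ)⁻¹ with hA
  set B := (1 - xᴴ * x)⁻¹ with hB
  have hAl : A * (1 - x * xᴴ) = 1 := Matrix.nonsing_inv_mul _ hd1
  have hAr : (1 - x * xᴴ) * A = 1 := Matrix.mul_nonsing_inv _ hd1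
  have hBl : B * (1 - xᴴ * x) = 1 := Matrix.nonsing_inv_mul _ hd2
  have hBr : (1 - xᴴ * x) * B = 1 := Matrix.mul_nonsing_inv _ hd2
  have comm : (1 - x * xᴴ) * x = x * (1 - xᴴ * x) := by noncomm_ring
  have comm2 : xᴴ * (1 - x * xᴴ) = (1 - xᴴ * x) * xᴴ := by noncomm_ring
  have k1 : A * x = x * B := by
    calc A * x = A * x * ((1 - xᴴ * x) * B) := by rw [hBr, mul_one]
      _ = A * ((1 - x * xᴴ) * x) * B := by rw [comm]; noncomm_ring
      _ = x * B := by rw [← mul_assoc, hAl, one_mul]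
  have k2 : xᴴ * A = B * xᴴ := by
    calc xᴴ * A = (B * (1 - xᴴ * x)) * xᴴ * A := by rw [hBl, one_mul]
      _ = B * (xᴴ * (1 - x * xᴴ)) * A := by rw [comm2]; noncomm_ring
      _ = B * xᴴ := by
          rw [mul_assoc, mul_assoc, hAr, mul_one]
  have k3 : A * x * xᴴ = A - 1 := by
    have : A * (1 - x * xᴴ) = 1 := hAl
    rw [mul_sub, mul_one] at this
    rw [mul_assoc]
    linear_combination (norm := noncomm_ring) -this
  have k4 : xᴴ * x * B = B - 1 := by
    have : (1 - xᴴ * x) * B = 1 := hBr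
    rw [sub_mul, one_mul] at this
    linear_combination (norm := noncomm_ring) -this
  exact siegel_aux A B x xᴴ y yᴴ k1 k2 k3 k4
end

section
/- Let r and t be real numbers with 0 ≤ r < 1 and 0 ≤ t ≤ 1. Define s = ((1+r)^t − (1−r)^t) / ((1+r)^t + (1−r)^t). Then 0 ≤ s ≤ r. -/
/-- For `0 ≤ r < 1` and `0 ≤ t ≤ 1`, the quantity
`s = ((1+r)^t - (1-r)^t)/((1+r)^t + (1-r)^t)` satisfies `0 ≤ s ≤ r`. -/
theorem almost_geodesic_scalar_bound (r t : ℝ)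
    (hr0 : 0 ≤ r) (hr1 : r < 1) (ht0 : 0 ≤ t) (ht1 : t ≤ 1) :
    let s : ℝ := ((1 + r) ^ t - (1 - r) ^ t) / ((1 + r) ^ t + (1 - r) ^ t)
    0 ≤ s ∧ s ≤ r := by
  intro s
  have h1r : (0:ℝ) < 1 - r := by linarith
  have h1r' : (0:ℝ) < 1 + r := by linarith
  have hb : 0 < (1 - r) ^ t := Real.rpow_pos_of_pos h1r t
  have ha : 0 < (1 + r) ^ t := Real.rpow_pos_of_pos h1r' t
  have hba : (1 - r) ^ t ≤ (1 + r) ^ t :=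
    Real.rpow_le_rpow (le_of_lt h1r) (by linarith) ht0
  have hx : (1:ℝ) ≤ (1 + r) / (1 - r) := (one_le_div h1r).mpr (by linarith)
  have hxt : ((1 + r) / (1 - r)) ^ t ≤ (1 + r) / (1 - r) := by
    calc ((1 + r) / (1 - r)) ^ t ≤ ((1 + r) / (1 - r)) ^ (1:ℝ) :=
          Real.rpow_le_rpow_of_exponent_le hx ht1
      _ = (1 + r) / (1 - r) := Real.rpow_one _
  have hdiv : (1 + r) ^ t / (1 - r) ^ t = ((1 + r) / (1 - r)) ^ t :=
    (Real.div_rpow (le_of_lt h1r') (le_of_lt h1r) t).symm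
  have key : (1 + r) ^ t * (1 - r) ≤ (1 - r) ^ t * (1 + r) := by
    have := hxt
    rw [← hdiv, div_le_div_iff₀ hb h1r] at this
    linarith
  constructor
  · apply div_nonneg (by linarith) (by linarith)
  · rw [div_le_iff₀ (by linarith)]
    nlinarith
end
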